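/- arXiv:1105.1734 — 2 statements merged into one kernel-verified Lean document; each statement's English description precedes it below -/
import Mathlib

section
/- The Lie bracket [(S,A,B),(S',A',B')] = ([S,S'], S∘A' - S'∘A, Ω(A(·),A'(·))^{sym}) on sp(V,Ω) × L(W,V) × Sym(W) satisfies the Jacobi identity (it is the Lie algebra of the generalized Jacobi group Jac(V,Ω;W)). -/
/-- Membership in the symplectic Lie algebra: `Ω(Su, v) + Ω(u, Sv) = 0`. -/
def InSp {V : Type*} [AddCommGroup V] [Module ℝ V]
    (Ω : V →ₗ[ℝ] V →ₗ[ℝ] ℝ) (S : V →ₗ[ℝ] V) : Prop :=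
  ∀ u v : V, Ω (S u) v + Ω u (S v) = 0

/-- The symmetrized form `Ω(A(·),A'(·))^sym(w₁,w₂) = ½(Ω(A w₁, A' w₂) + Ω(A w₂, A' w₁))`. -/
noncomputable def OmSym {V W : Type*} [AddCommGroup V] [Module ℝ V]
    [AddCommGroup W] [Module ℝ W] (Ω : V →ₗ[ℝ] V →ₗ[ℝ] ℝ) (A A' : W →ₗ[ℝ] V) :
    W →ₗ[ℝ] W →ₗ[ℝ] ℝ :=
  LinearMap.mk₂ ℝ (fun w₁ w₂ => (1 / 2 : ℝ) * (Ω (A w₁) (A' w₂) + Ω (A w₂) (A' w₁)))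
    (by intros; simp [map_add, LinearMap.add_apply]; ring)
    (by intros; simp [map_smul, LinearMap.smul_apply, smul_eq_mul]; ring)
    (by intros; simp [map_add, LinearMap.add_apply]; ring)
    (by intros; simp [map_smul, LinearMap.smul_apply, smul_eq_mul]; ring)

/-- The bracket of the generalized Jacobi Lie algebra on
`sp(V,Ω) × L(W,V) × Sym(W)`:
`[(S,A,B),(S',A',B')] = ([S,S'], S∘A' - S'∘A, Ω(A(·),A'(·))^sym)`. -/
noncomputable def genJacBracket {V W : Type*} [AddCommGroup V] [Module ℝ V]
    [AddCommGroup W] [Module ℝ W] (Ω : V →ₗ[ℝ] V →ₗ[ℝ] ℝ)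
    (x y : (V →ₗ[ℝ] V) × (W →ₗ[ℝ] V) × (W →ₗ[ℝ] W →ₗ[ℝ] ℝ)) :
    (V →ₗ[ℝ] V) × (W →ₗ[ℝ] V) × (W →ₗ[ℝ] W →ₗ[ℝ] ℝ) :=
  (x.1 ∘ₗ y.1 - y.1 ∘ₗ x.1, (x.1 ∘ₗ y.2.1 - y.1 ∘ₗ x.2.1, OmSym Ω x.2.1 y.2.1))

/-!
The `sp(V,Ω)` and `L(W,V)` components of the Jacobiator vanish because `L(W,V)` is an
`End(V)`-module under composition. For the `Sym(W)` component, skewness of `Ω` turns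
`S ∈ sp(V,Ω)` into symmetry of `(u, v) ↦ Ω(S u, v)`, so `Ω(S∘A(·), C(·))^sym` is symmetric in
`A` and `C`; the six terms of the cyclic sum then cancel in pairs.
-/

theorem LinearMap.commutator_comp_sub_comp_commutator_cyclic
    {R M N : Type*} [Semiring R] [AddCommGroup M] [Module R M] [AddCommGroup N] [Module R N]
    (S S' S'' : M →ₗ[R] M) (A A' A'' : N →ₗ[R] M) :
    (S ∘ₗ S' - S' ∘ₗ S) ∘ₗ A'' - S'' ∘ₗ (S ∘ₗ A' - S' ∘ₗ A) +
        ((S' ∘ₗ S'' - S'' ∘ₗ S') ∘ₗ A - S ∘ₗ (S' ∘ₗ A'' - S'' ∘ₗ A')) +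
        ((S'' ∘ₗ S - S ∘ₗ S'') ∘ₗ A' - S' ∘ₗ (S'' ∘ₗ A - S ∘ₗ A'')) = 0 := by
  ext w
  simp only [LinearMap.add_apply, LinearMap.sub_apply, LinearMap.comp_apply, map_sub,
    LinearMap.zero_apply]
  abel

section OmSym

variable {V W : Type*} [AddCommGroup V] [Module ℝ V] [AddCommGroup W] [Module ℝ W]
  {Ω : V →ₗ[ℝ] V →ₗ[ℝ] ℝ}

theorem InSp.apply_comm (hskew : ∀ u v : V, Ω u v = -Ω v u) {S : V →ₗ[ℝ] V} (hS : InSp Ω S)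
    (u v : V) : Ω (S u) v = Ω (S v) u := by
  linarith [hS u v, hskew u (S v)]

theorem omSym_sub_left (A B C : W →ₗ[ℝ] V) :
    OmSym Ω (A - B) C = OmSym Ω A C - OmSym Ω B C := by
  ext w₁ w₂
  simp only [OmSym, LinearMap.mk₂_apply, LinearMap.sub_apply, map_sub]
  ring

theorem omSym_comp_comm (hskew : ∀ u v : V, Ω u v = -Ω v u) {S : V →ₗ[ℝ] V} (hS : InSp Ω S)
    (A C : W →ₗ[ℝ] V) : OmSym Ω (S ∘ₗ A) C = OmSym Ω (S ∘ₗ C) A := by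
  ext w₁ w₂
  simp only [OmSym, LinearMap.mk₂_apply, LinearMap.comp_apply, hS.apply_comm hskew (A _)]
  ring

end OmSym

theorem generalized_jacobi_bracket_jacobi_identity_general (V W : Type*)
    [AddCommGroup V] [Module ℝ V] [AddCommGroup W] [Module ℝ W]
    (Ω : V →ₗ[ℝ] V →ₗ[ℝ] ℝ) (hskew : ∀ u v : V, Ω u v = -Ω v u) :
    ∀ x y z : (V →ₗ[ℝ] V) × (W →ₗ[ℝ] V) × (W →ₗ[ℝ] W →ₗ[ℝ] ℝ),
      InSp Ω x.1 → InSp Ω y.1 → InSp Ω z.1 →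
      genJacBracket Ω (genJacBracket Ω x y) z + genJacBracket Ω (genJacBracket Ω y z) x +
        genJacBracket Ω (genJacBracket Ω z x) y = 0 := by
  rintro ⟨S, A, B⟩ ⟨S', A', B'⟩ ⟨S'', A'', B''⟩ hS hS' hS''
  refine Prod.ext ?_ (Prod.ext ?_ ?_)
  · exact LinearMap.commutator_comp_sub_comp_commutator_cyclic S S' S'' S S' S''
  · exact LinearMap.commutator_comp_sub_comp_commutator_cyclic S S' S'' A A' A''
  · simp only [genJacBracket, Prod.snd_add, Prod.snd_zero, omSym_sub_left,
      omSym_comp_comm hskew hS A', omSym_comp_comm hskew hS' A'', omSym_comp_comm hskew hS'' A]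
    abel

/-- The Lie bracket `[(S,A,B),(S',A',B')] = ([S,S'], S∘A' - S'∘A, Ω(A(·),A'(·))^sym)` of
the generalized Jacobi group satisfies the Jacobi identity. -/
theorem generalized_jacobi_bracket_jacobi_identity (V W : Type*)
    [AddCommGroup V] [Module ℝ V] [AddCommGroup W] [Module ℝ W]
    [FiniteDimensional ℝ W]
    (Ω : V →ₗ[ℝ] V →ₗ[ℝ] ℝ) (hskew : ∀ u v : V, Ω u v = -Ω v u) :
    ∀ x y z : (V →ₗ[ℝ] V) × (W →ₗ[ℝ] V) × (W →ₗ[ℝ] W →ₗ[ℝ] ℝ),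
      InSp Ω x.1 → InSp Ω y.1 → InSp Ω z.1 →
      genJacBracket Ω (genJacBracket Ω x y) z + genJacBracket Ω (genJacBracket Ω y z) x +
        genJacBracket Ω (genJacBracket Ω z x) y = 0 :=
  generalized_jacobi_bracket_jacobi_identity_general V W Ω hskew
end

section
/- Let (V,Ω) be symplectic with W = ker of a degenerate antisymmetric form on V ⊕ W. The map Γ(σ,α,β) := (B^♯∘σ, B^♯∘α*, β) is a Lie algebra isomorphism from (Sym(V) ⋉ L(V,W*)) ×_C Sym(W), with bracket ([σ,σ']_Π, α∘Π^♯∘σ' - α'∘Π^♯∘σ, Π(α*(·),α'*(·))^{sym}), onto the generalized Jacobi Lie algebra jac(V,Ω;W) with bracket ([S,S'], S∘A' - S'∘A, Ω(A(·),A'(·))^{sym}). -/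
/-- The symmetrized Poisson pairing `Π(α*(·),α'*(·))^sym` on `W`, where `Π(β,γ) = β(P γ)`
and `α* = α.flip : W →ₗ V*` is the adjoint of `α : V →ₗ W*`. -/
noncomputable def PiSym {V W : Type*} [AddCommGroup V] [Module ℝ V]
    [AddCommGroup W] [Module ℝ W] (P : (V →ₗ[ℝ] ℝ) →ₗ[ℝ] V)
    (α α' : V →ₗ[ℝ] W →ₗ[ℝ] ℝ) : W →ₗ[ℝ] W →ₗ[ℝ] ℝ :=
  LinearMap.mk₂ ℝ
    (fun w₁ w₂ => (1 / 2 : ℝ) *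
      ((α.flip w₁) (P (α'.flip w₂)) + (α.flip w₂) (P (α'.flip w₁))))
    (by intros; simp [map_add, LinearMap.add_apply]; ring)
    (by intros; simp [map_smul, LinearMap.smul_apply, smul_eq_mul]; ring)
    (by intros; simp [map_add, LinearMap.add_apply]; ring)
    (by intros; simp [map_smul, LinearMap.smul_apply, smul_eq_mul]; ring)

/-- The bracket of `(Sym(V) ⋉ L(V,W*)) ×_C Sym(W)`:
`[(σ,α,β),(σ',α',β')] = ([σ,σ']_Π, α∘P∘σ' - α'∘P∘σ, Π(α*(·),α'*(·))^sym)`. -/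
noncomputable def srcBracketW {V W : Type*} [AddCommGroup V] [Module ℝ V]
    [AddCommGroup W] [Module ℝ W] (P : (V →ₗ[ℝ] ℝ) →ₗ[ℝ] V)
    (x y : (V →ₗ[ℝ] V →ₗ[ℝ] ℝ) × (V →ₗ[ℝ] W →ₗ[ℝ] ℝ) × (W →ₗ[ℝ] W →ₗ[ℝ] ℝ)) :
    (V →ₗ[ℝ] V →ₗ[ℝ] ℝ) × (V →ₗ[ℝ] W →ₗ[ℝ] ℝ) × (W →ₗ[ℝ] W →ₗ[ℝ] ℝ) :=
  (x.1 ∘ₗ (P ∘ₗ y.1) - y.1 ∘ₗ (P ∘ₗ x.1),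
    (x.2.1 ∘ₗ (P ∘ₗ y.1) - y.2.1 ∘ₗ (P ∘ₗ x.1), PiSym P x.2.1 y.2.1))

/-- The map `Γ(σ,α,β) = (B^♯∘σ, B^♯∘α*, β)`, with `B^♯ = P = Π^♯`. -/
noncomputable def GammaGen {V W : Type*} [AddCommGroup V] [Module ℝ V]
    [AddCommGroup W] [Module ℝ W] (P : (V →ₗ[ℝ] ℝ) →ₗ[ℝ] V)
    (x : (V →ₗ[ℝ] V →ₗ[ℝ] ℝ) × (V →ₗ[ℝ] W →ₗ[ℝ] ℝ) × (W →ₗ[ℝ] W →ₗ[ℝ] ℝ)) :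
    (V →ₗ[ℝ] V) × (W →ₗ[ℝ] V) × (W →ₗ[ℝ] W →ₗ[ℝ] ℝ) :=
  (P ∘ₗ x.1, (P ∘ₗ x.2.1.flip, x.2.2))

section

variable {V W : Type*} [AddCommGroup V] [Module ℝ V] [AddCommGroup W] [Module ℝ W]
  {Ω : V →ₗ[ℝ] V →ₗ[ℝ] ℝ} {P : (V →ₗ[ℝ] ℝ) →ₗ[ℝ] V}

theorem apply_sharp_eq_neg (hskew : ∀ u v : V, Ω u v = -Ω v u)
    (hP₁ : ∀ (β : V →ₗ[ℝ] ℝ) (v : V), Ω (P β) v = β v) (β γ : V →ₗ[ℝ] ℝ) :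
    β (P γ) = -γ (P β) := by
  rw [← hP₁ β, ← hP₁ γ, hskew]

theorem inSp_sharp_comp_of_symm (hskew : ∀ u v : V, Ω u v = -Ω v u)
    (hP₁ : ∀ (β : V →ₗ[ℝ] ℝ) (v : V), Ω (P β) v = β v) {σ : V →ₗ[ℝ] V →ₗ[ℝ] ℝ}
    (hσ : ∀ u v : V, σ u v = σ v u) : InSp Ω (P ∘ₗ σ) := by
  intro u v
  rw [LinearMap.comp_apply, LinearMap.comp_apply, hP₁, hskew u, hP₁, hσ]
  exact add_neg_cancel _

theorem flip_comp_sharp_comp_of_symm (hskew : ∀ u v : V, Ω u v = -Ω v u)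
    (hP₁ : ∀ (β : V →ₗ[ℝ] ℝ) (v : V), Ω (P β) v = β v) {σ : V →ₗ[ℝ] V →ₗ[ℝ] ℝ}
    (hσ : ∀ u v : V, σ u v = σ v u) (α : V →ₗ[ℝ] W →ₗ[ℝ] ℝ) :
    (α ∘ₗ (P ∘ₗ σ)).flip = -(σ ∘ₗ P ∘ₗ α.flip) := by
  ext w v
  change α.flip w (P (σ v)) = -σ (P (α.flip w)) v
  rw [apply_sharp_eq_neg hskew hP₁, hσ]

theorem piSym_eq_omSym (hP₁ : ∀ (β : V →ₗ[ℝ] ℝ) (v : V), Ω (P β) v = β v)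
    (α α' : V →ₗ[ℝ] W →ₗ[ℝ] ℝ) :
    PiSym P α α' = OmSym Ω (P ∘ₗ α.flip) (P ∘ₗ α'.flip) := by
  ext w₁ w₂
  simp only [PiSym, OmSym, LinearMap.mk₂_apply, LinearMap.comp_apply, hP₁]

theorem gammaGen_srcBracketW (hskew : ∀ u v : V, Ω u v = -Ω v u)
    (hP₁ : ∀ (β : V →ₗ[ℝ] ℝ) (v : V), Ω (P β) v = β v)
    {x y : (V →ₗ[ℝ] V →ₗ[ℝ] ℝ) × (V →ₗ[ℝ] W →ₗ[ℝ] ℝ) × (W →ₗ[ℝ] W →ₗ[ℝ] ℝ)}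
    (hx : ∀ u v : V, x.1 u v = x.1 v u) (hy : ∀ u v : V, y.1 u v = y.1 v u) :
    GammaGen P (srcBracketW P x y) = genJacBracket Ω (GammaGen P x) (GammaGen P y) := by
  have flip_sub (f g : V →ₗ[ℝ] W →ₗ[ℝ] ℝ) : (f - g).flip = f.flip - g.flip := rfl
  simp only [GammaGen, srcBracketW, genJacBracket, flip_sub,
    flip_comp_sharp_comp_of_symm hskew hP₁ hx, flip_comp_sharp_comp_of_symm hskew hP₁ hy,
    piSym_eq_omSym hP₁, LinearMap.comp_sub, LinearMap.comp_neg, LinearMap.comp_assoc,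
    neg_sub_neg]

theorem gammaGen_injective (hP₁ : ∀ (β : V →ₗ[ℝ] ℝ) (v : V), Ω (P β) v = β v) :
    Function.Injective (GammaGen (W := W) P) := by
  have hP : Function.Injective P :=
    Function.LeftInverse.injective (g := Ω) fun β => LinearMap.ext (hP₁ β)
  rintro ⟨σ, α, β⟩ ⟨σ', α', β'⟩ h
  simp only [GammaGen, Prod.mk.injEq] at h
  obtain ⟨hσ, hα, rfl⟩ := h
  rw [(LinearMap.cancel_left hP).mp hσ, LinearMap.flip_inj ((LinearMap.cancel_left hP).mp hα)]

theorem symm_comp_of_inSp (hskew : ∀ u v : V, Ω u v = -Ω v u) {S : V →ₗ[ℝ] V}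
    (hS : InSp Ω S) (u v : V) : (Ω ∘ₗ S) u v = (Ω ∘ₗ S) v u := by
  have := hS v u
  rw [hskew v] at this
  simp only [LinearMap.comp_apply]
  linarith

theorem gammaGen_flat (hP₂ : ∀ u : V, P (Ω u) = u)
    (z : (V →ₗ[ℝ] V) × (W →ₗ[ℝ] V) × (W →ₗ[ℝ] W →ₗ[ℝ] ℝ)) :
    GammaGen P (Ω ∘ₗ z.1, ((Ω ∘ₗ z.2.1).flip, z.2.2)) = z := by
  have hPΩ : P ∘ₗ Ω = LinearMap.id := LinearMap.ext hP₂
  simp only [GammaGen, LinearMap.flip_flip, ← LinearMap.comp_assoc, hPΩ, LinearMap.id_comp]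

end

/-- Let `(V,Ω)` be symplectic with `P = Π^♯ = B^♯` the inverse of `Ω^♭`.  The map
`Γ(σ,α,β) = (B^♯∘σ, B^♯∘α*, β)` is a Lie algebra isomorphism from
`(Sym(V) ⋉ L(V,W*)) ×_C Sym(W)`, with bracket
`([σ,σ']_Π, α∘Π^♯∘σ' - α'∘Π^♯∘σ, Π(α*(·),α'*(·))^sym)`, onto the generalized Jacobi Lie
algebra `jac(V,Ω;W)` with bracket `([S,S'], S∘A' - S'∘A, Ω(A(·),A'(·))^sym)`: it maps
symmetric `σ` into `sp(V,Ω)`, takes brackets to brackets, and is a bijection onto the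
triples `(S,A,B)` with `S ∈ sp(V,Ω)` and `B` symmetric. -/
theorem gamma_generalized_jacobi_iso (V W : Type*) [AddCommGroup V] [Module ℝ V]
    [AddCommGroup W] [Module ℝ W]
    (Ω : V →ₗ[ℝ] V →ₗ[ℝ] ℝ) (hskew : ∀ u v : V, Ω u v = -Ω v u)
    (P : (V →ₗ[ℝ] ℝ) →ₗ[ℝ] V)
    (hP₁ : ∀ (β : V →ₗ[ℝ] ℝ) (v : V), Ω (P β) v = β v)
    (hP₂ : ∀ u : V, P (Ω u) = u) :
    (∀ x : (V →ₗ[ℝ] V →ₗ[ℝ] ℝ) × (V →ₗ[ℝ] W →ₗ[ℝ] ℝ) × (W →ₗ[ℝ] W →ₗ[ℝ] ℝ),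
      (∀ u v : V, x.1 u v = x.1 v u) → InSp Ω (GammaGen P x).1) ∧
    (∀ x y : (V →ₗ[ℝ] V →ₗ[ℝ] ℝ) × (V →ₗ[ℝ] W →ₗ[ℝ] ℝ) × (W →ₗ[ℝ] W →ₗ[ℝ] ℝ),
      (∀ u v : V, x.1 u v = x.1 v u) → (∀ u v : V, y.1 u v = y.1 v u) →
      GammaGen P (srcBracketW P x y) =
        genJacBracket Ω (GammaGen P x) (GammaGen P y)) ∧
    (∀ x y : (V →ₗ[ℝ] V →ₗ[ℝ] ℝ) × (V →ₗ[ℝ] W →ₗ[ℝ] ℝ) × (W →ₗ[ℝ] W →ₗ[ℝ] ℝ),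
      GammaGen P x = GammaGen P y → x = y) ∧
    (∀ z : (V →ₗ[ℝ] V) × (W →ₗ[ℝ] V) × (W →ₗ[ℝ] W →ₗ[ℝ] ℝ),
      InSp Ω z.1 → (∀ w₁ w₂ : W, z.2.2 w₁ w₂ = z.2.2 w₂ w₁) →
      ∃ x : (V →ₗ[ℝ] V →ₗ[ℝ] ℝ) × (V →ₗ[ℝ] W →ₗ[ℝ] ℝ) × (W →ₗ[ℝ] W →ₗ[ℝ] ℝ),
        (∀ u v : V, x.1 u v = x.1 v u) ∧
        (∀ w₁ w₂ : W, x.2.2 w₁ w₂ = x.2.2 w₂ w₁) ∧ GammaGen P x = z) :=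
  ⟨fun _ hx => inSp_sharp_comp_of_symm hskew hP₁ hx,
    fun _ _ hx hy => gammaGen_srcBracketW hskew hP₁ hx hy,
    fun _ _ h => gammaGen_injective hP₁ h,
    fun z hz hB => ⟨_, symm_comp_of_inSp hskew hz, hB, gammaGen_flat hP₂ z⟩⟩
end
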